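/- Let {B_k}_{k∈ℕ} be an enumeration of all closed cubes in ℝ^n whose sides are parallel to the coordinate axes, whose centers have all coordinates rational, and whose edge length equals 1/(2^{l−1}√n) for some l ∈ ℕ, l ≥ 1. Fix positive reals t_k with Σ_{k=1}^∞ t_k = 1, and define ‖f‖_{KS^p} = (Σ_{k=1}^∞ t_k |∫_{B_k} f dλ_n|^p)^{1/p} for 1 ≤ p < ∞ and ‖f‖_{KS^∞} = sup_{k≥1} |∫_{B_k} f dλ_n|. Let (φ_j) be a sequence of smooth compactly supported functions on ℝ^n converging to φ in the test-function space 𝒟(ℝ^n): there is a fixed compact set K ⊆ ℝ^n containing the supports of all φ_j and of φ, and for every multi-index α the derivatives D^α φ_j converge uniformly on K to D^α φ. Then for every multi-index α and every 1 ≤ p ≤ ∞, ‖D^α φ_j − D^α φ‖_{KS^p} → 0 as j → ∞. In particular 𝒟(ℝ^n) embeds continuously into the KS^p-norm completion. -/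

import Mathlib

open MeasureTheory
open scoped ENNReal

/-- The closed cube in `ℝ^n` with center `c ∈ ℚ^n`, sides parallel to the coordinate
axes, and edge length `1/(2^(l-1) √n)`: the closed ball of radius half the edge length
around `c` in the sup metric on `ℝ^n`. -/
def ratCube (n : ℕ) (c : Fin n → ℚ) (l : ℕ) : Set (Fin n → ℝ) :=
  Metric.closedBall (fun i => (c i : ℝ)) (1 / (2 ^ (l - 1) * Real.sqrt n) / 2)

/-- `B : ℕ → Set ℝ^n` enumerates the family of all closed cubes with sides parallel to
the coordinate axes, rational centers, and edge length `1/(2^(l-1) √n)` for some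
`l ≥ 1`. -/
def EnumeratesRatCubes (n : ℕ) (B : ℕ → Set (Fin n → ℝ)) : Prop :=
  (∀ k, ∃ (c : Fin n → ℚ) (l : ℕ), 1 ≤ l ∧ B k = ratCube n c l) ∧
  (∀ (c : Fin n → ℚ) (l : ℕ), 1 ≤ l → ∃ k, B k = ratCube n c l)

/-- The `KS^p` norm `(Σ_k t_k |∫_{B_k} f dλ_n|^p)^{1/p}` (for `p < ∞`), resp.
`sup_k |∫_{B_k} f dλ_n|` (for `p = ∞`). -/
noncomputable def KSnorm (n : ℕ) (B : ℕ → Set (Fin n → ℝ)) (t : ℕ → ℝ) (p : ℝ≥0∞)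
    (f : (Fin n → ℝ) → ℂ) : ℝ :=
  if p = ⊤ then ⨆ k, ‖∫ x in B k, f x ∂volume‖
  else (∑' k, t k * ‖∫ x in B k, f x ∂volume‖ ^ p.toReal) ^ (1 / p.toReal)


/-- The partial derivative `∂f/∂x_i` of `f : ℝ^n → ℂ`. -/
noncomputable def pderivAt (n : ℕ) (i : Fin n) (f : (Fin n → ℝ) → ℂ) :
    (Fin n → ℝ) → ℂ :=
  fun x => fderiv ℝ f x (Pi.single i 1)

/-- The multi-index partial derivative `D^α f = ∂^{α_1}_{x_1} ⋯ ∂^{α_n}_{x_n} f`. -/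
noncomputable def multiDeriv (n : ℕ) (α : Fin n → ℕ) (f : (Fin n → ℝ) → ℂ) :
    (Fin n → ℝ) → ℂ :=
  ((List.ofFn fun i : Fin n => (pderivAt n i)^[α i]).foldr (· ∘ ·) id) f

/-- An operator on functions is "good" if it preserves smoothness and shrinks support. -/
def GoodOp (n : ℕ) (g : ((Fin n → ℝ) → ℂ) → ((Fin n → ℝ) → ℂ)) : Prop :=
  ∀ f, ContDiff ℝ (⊤ : ℕ∞) f → ContDiff ℝ (⊤ : ℕ∞) (g f) ∧ tsupport (g f) ⊆ tsupport f

lemma goodOp_id (n : ℕ) : GoodOp n id := fun _ hf => ⟨hf, subset_rfl⟩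

lemma goodOp_comp {n : ℕ} {g h} (hg : GoodOp n g) (hh : GoodOp n h) :
    GoodOp n (g ∘ h) := by
  intro f hf
  obtain ⟨h1, h2⟩ := hh f hf
  obtain ⟨g1, g2⟩ := hg _ h1
  exact ⟨g1, g2.trans h2⟩

lemma goodOp_pderivAt (n : ℕ) (i : Fin n) : GoodOp n (pderivAt n i) := by
  intro f hf
  refine ⟨(hf.fderiv_right (by simp)).clm_apply contDiff_const, ?_⟩
  have h1 : Function.support (pderivAt n i f) ⊆ tsupport f := by
    intro x hx
    have hx' : fderiv ℝ f x ≠ 0 := by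
      intro h0
      apply hx
      simp [pderivAt, h0]
    exact support_fderiv_subset ℝ hx'
  exact closure_minimal h1 (isClosed_tsupport f)

lemma goodOp_iterate {n : ℕ} {g} (hg : GoodOp n g) (m : ℕ) : GoodOp n (g^[m]) := by
  induction m with
  | zero => exact goodOp_id n
  | succ m ih =>
    rw [Function.iterate_succ']
    exact goodOp_comp hg ih

lemma goodOp_foldr {n : ℕ} (L : List (((Fin n → ℝ) → ℂ) → ((Fin n → ℝ) → ℂ)))
    (h : ∀ g ∈ L, GoodOp n g) : GoodOp n (L.foldr (· ∘ ·) id) := by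
  induction L with
  | nil => exact goodOp_id n
  | cons a L ih =>
    simp only [List.foldr_cons]
    exact goodOp_comp (h a List.mem_cons_self) (ih fun g hg => h g (List.mem_cons_of_mem a hg))

lemma multiDeriv_good {n : ℕ} (α : Fin n → ℕ) {f : (Fin n → ℝ) → ℂ}
    (hf : ContDiff ℝ (⊤ : ℕ∞) f) :
    ContDiff ℝ (⊤ : ℕ∞) (multiDeriv n α f) ∧ tsupport (multiDeriv n α f) ⊆ tsupport f := by
  refine goodOp_foldr _ ?_ f hf
  intro g hg
  rw [List.mem_ofFn] at hg
  obtain ⟨i, rfl⟩ := hg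
  exact goodOp_iterate (goodOp_pderivAt n i) (α i)

lemma KSnorm_nonneg (n : ℕ) (B : ℕ → Set (Fin n → ℝ)) {t : ℕ → ℝ} (ht : ∀ k, 0 < t k)
    (p : ℝ≥0∞) (f : (Fin n → ℝ) → ℂ) : 0 ≤ KSnorm n B t p f := by
  unfold KSnorm
  split_ifs
  · exact Real.iSup_nonneg fun k => norm_nonneg _
  · exact Real.rpow_nonneg
      (tsum_nonneg fun k => mul_nonneg (ht k).le (Real.rpow_nonneg (norm_nonneg _) _)) _

lemma KSnorm_le {n : ℕ} {B : ℕ → Set (Fin n → ℝ)} {t : ℕ → ℝ} {p : ℝ≥0∞}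
    (ht : ∀ k, 0 < t k) (hts : ∑' k, t k = 1) (hp : 1 ≤ p)
    (f : (Fin n → ℝ) → ℂ) {M : ℝ} (hM : 0 ≤ M)
    (h : ∀ k, ‖∫ x in B k, f x ∂volume‖ ≤ M) : KSnorm n B t p f ≤ M := by
  unfold KSnorm
  split_ifs with hptop
  · exact ciSup_le h
  · have hq : 0 < p.toReal :=
      ENNReal.toReal_pos (by intro h0; rw [h0] at hp; simp at hp) hptop
    have hsum : Summable t := by
      by_contra h'
      rw [tsum_eq_zero_of_not_summable h'] at hts
      norm_num at hts
    have hle : ∀ k, t k * ‖∫ x in B k, f x ∂volume‖ ^ p.toReal ≤ t k * M ^ p.toReal := by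
      intro k
      exact mul_le_mul_of_nonneg_left
        (Real.rpow_le_rpow (norm_nonneg _) (h k) hq.le) (ht k).le
    have hsum2 : Summable fun k => t k * M ^ p.toReal := hsum.mul_right _
    have hsum1 : Summable fun k => t k * ‖∫ x in B k, f x ∂volume‖ ^ p.toReal := by
      exact Summable.of_nonneg_of_le
        (fun k => mul_nonneg (ht k).le (Real.rpow_nonneg (norm_nonneg _) _)) hle hsum2
    have htsle : (∑' k, t k * ‖∫ x in B k, f x ∂volume‖ ^ p.toReal) ≤ M ^ p.toReal := by
      calc (∑' k, t k * ‖∫ x in B k, f x ∂volume‖ ^ p.toReal)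
          ≤ ∑' k, t k * M ^ p.toReal := Summable.tsum_le_tsum hle hsum1 hsum2
        _ = (∑' k, t k) * M ^ p.toReal := tsum_mul_right
        _ = M ^ p.toReal := by rw [hts, one_mul]
    calc (∑' k, t k * ‖∫ x in B k, f x ∂volume‖ ^ p.toReal) ^ (1 / p.toReal)
        ≤ (M ^ p.toReal) ^ (1 / p.toReal) := by
          refine Real.rpow_le_rpow ?_ htsle (by positivity)
          exact tsum_nonneg fun k => mul_nonneg (ht k).le (Real.rpow_nonneg (norm_nonneg _) _)
      _ = M := by
          rw [← Real.rpow_mul hM, mul_one_div_cancel hq.ne', Real.rpow_one]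

/-- if `(φ_j)` converges to `φ` in the test-function space `𝒟(ℝ^n)`
(common compact support `K`, all multi-index derivatives converge uniformly on `K`),
then `‖D^α φ_j - D^α φ‖_{KS^p} → 0` for every multi-index `α` and every `1 ≤ p ≤ ∞`:
`𝒟(ℝ^n)` embeds continuously into `KS^p`. -/
theorem test_function_convergence_implies_KS_convergence
    (n : ℕ) (B : ℕ → Set (Fin n → ℝ)) (hB : EnumeratesRatCubes n B)
    (t : ℕ → ℝ) (ht : ∀ k, 0 < t k) (hts : ∑' k, t k = 1)
    (K : Set (Fin n → ℝ)) (hK : IsCompact K)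
    (φ : ℕ → (Fin n → ℝ) → ℂ) (φlim : (Fin n → ℝ) → ℂ)
    (hφ : ∀ j, ContDiff ℝ (⊤ : ℕ∞) (φ j)) (hφlim : ContDiff ℝ (⊤ : ℕ∞) φlim)
    (hsupp : ∀ j, tsupport (φ j) ⊆ K) (hsupplim : tsupport φlim ⊆ K)
    (hconv : ∀ α : Fin n → ℕ,
      TendstoUniformlyOn (fun j => multiDeriv n α (φ j)) (multiDeriv n α φlim)
        Filter.atTop K) :
    ∀ (α : Fin n → ℕ) (p : ℝ≥0∞), 1 ≤ p →
      Filter.Tendsto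
        (fun j => KSnorm n B t p (multiDeriv n α (φ j) - multiDeriv n α φlim))
        Filter.atTop (nhds 0) := by
  intro α p hp
  rw [Metric.tendsto_nhds]
  intro ε hε
  set C : ℝ := (volume K).toReal + 1 with hC
  have hCpos : 0 < C := by positivity
  set δ : ℝ := ε / (2 * C) with hδ
  have hδpos : 0 < δ := by positivity
  have hconvδ := (Metric.tendstoUniformlyOn_iff.1 (hconv α)) δ hδpos
  filter_upwards [hconvδ] with j hj
  set g : (Fin n → ℝ) → ℂ := multiDeriv n α (φ j) - multiDeriv n α φlim with hg
  obtain ⟨hcd1, hsup1⟩ := multiDeriv_good α (hφ j)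
  obtain ⟨hcd2, hsup2⟩ := multiDeriv_good α hφlim
  have hgx : ∀ x ∈ K, ‖g x‖ ≤ δ := by
    intro x hx
    have := hj x hx
    rw [dist_comm, dist_eq_norm] at this
    exact le_of_lt this
  have hg0 : ∀ x ∉ K, g x = 0 := by
    intro x hx
    have h1 : multiDeriv n α (φ j) x = 0 :=
      image_eq_zero_of_notMem_tsupport fun hmem => hx (hsup1.trans (hsupp j) hmem)
    have h2 : multiDeriv n α φlim x = 0 :=
      image_eq_zero_of_notMem_tsupport fun hmem => hx (hsup2.trans hsupplim hmem)
    simp [hg, h1, h2]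
  have hgc : Continuous g := (hcd1.sub hcd2).continuous
  have hgcs : HasCompactSupport g := by
    refine IsCompact.of_isClosed_subset hK (isClosed_tsupport g) ?_
    refine closure_minimal (fun x hx => ?_) (hK.isClosed)
    by_contra hxK
    exact hx (hg0 x hxK)
  have hgint : Integrable g volume := hgc.integrable_of_hasCompactSupport hgcs
  have key : ∀ k, ‖∫ x in B k, g x ∂volume‖ ≤ δ * (volume K).toReal := by
    intro k
    calc ‖∫ x in B k, g x ∂volume‖
        ≤ ∫ x in B k, ‖g x‖ ∂volume := norm_integral_le_integral_norm _
      _ ≤ ∫ x, ‖g x‖ ∂volume :=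
          setIntegral_le_integral hgint.norm
            (Filter.Eventually.of_forall fun x => norm_nonneg _)
      _ = ∫ x in K, ‖g x‖ ∂volume :=
          (setIntegral_eq_integral_of_forall_compl_eq_zero fun x hx => by
            rw [hg0 x hx, norm_zero]).symm
      _ ≤ ‖∫ x in K, ‖g x‖ ∂volume‖ := le_abs_self _
      _ ≤ δ * (volume K).toReal := by
          refine norm_setIntegral_le_of_norm_le_const hK.measure_lt_top
            (fun x hx => ?_)
          rw [Real.norm_eq_abs, abs_of_nonneg (norm_nonneg _)]
          exact hgx x hx
  have hKS : KSnorm n B t p g ≤ δ * (volume K).toReal :=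
    KSnorm_le ht hts hp g (by positivity) key
  have hKS0 : 0 ≤ KSnorm n B t p g := KSnorm_nonneg n B ht p g
  rw [dist_zero_right, Real.norm_eq_abs, abs_of_nonneg hKS0]
  have : δ * (volume K).toReal < δ * C := by
    apply mul_lt_mul_of_pos_left _ hδpos
    rw [hC]; linarith
  have hδC : δ * C = ε / 2 := by
    rw [hδ]; field_simp
  calc KSnorm n B t p g ≤ δ * (volume K).toReal := hKS
    _ < δ * C := this
    _ = ε / 2 := hδC
    _ < ε := by linarith
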